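/- Let (D,W) be a consistent NMU default theory of tightness c and let L be a set of literals in W. Then every minimal strong outlier witness set S for L in (D,W) has size at most c. -/

import Mathlib

/-! Propositional formulas -/

inductive Form (V : Type) : Type
  | atom : V → Form V
  | tru  : Form V
  | fals : Form V
  | neg  : Form V → Form V
  | conj : Form V → Form V → Form V
  | disj : Form V → Form V → Form V

/-- Satisfaction of a formula by a valuation. -/
def Form.sat {V : Type} (v : V → Prop) : Form V → Prop
  | .atom a => v a
  | .tru => True
  | .fals => False
  | .neg φ => ¬ Form.sat v φ
  | .conj φ ψ => Form.sat v φ ∧ Form.sat v ψ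
  | .disj φ ψ => Form.sat v φ ∨ Form.sat v ψ

/-- Logical logClosure `T*` of a set of formulas. -/
def logClosure {V : Type} (T : Set (Form V)) : Set (Form V) :=
  { φ | ∀ v : V → Prop, (∀ ψ ∈ T, Form.sat v ψ) → Form.sat v φ }

/-- A default rule `α : β₁,…,β_m / γ` (`pre = none` means the prerequisite is missing). -/
structure Default (V : Type) : Type where
  pre   : Option (Form V)
  justs : List (Form V)
  concl : Form V

/-- The stage sets `E_i` relative to a candidate extension `E`:
`E_0 = W`, `E_{i+1} = E_i* ∪ {γ | α:β₁,…,β_m/γ ∈ D, α ∈ E_i, ¬β₁ ∉ E, …, ¬β_m ∉ E}`. -/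
def extStage {V : Type} (D : Set (Default V)) (W : Set (Form V)) (E : Set (Form V)) :
    ℕ → Set (Form V)
  | 0 => W
  | i + 1 =>
      logClosure (extStage D W E i) ∪
        { φ | ∃ d ∈ D, d.concl = φ ∧ (∀ a ∈ d.pre, a ∈ extStage D W E i) ∧
              ∀ b ∈ d.justs, Form.neg b ∉ E }

/-- `E` is an extension of the default theory `(D, W)`. -/
def IsExtension {V : Type} (D : Set (Default V)) (W : Set (Form V)) (E : Set (Form V)) : Prop :=
  E = ⋃ i, extStage D W E i

/-- `(D, W) ⊨ φ`: every extension of `(D, W)` contains `φ`. -/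
def entails {V : Type} (D : Set (Default V)) (W : Set (Form V)) (φ : Form V) : Prop :=
  ∀ E, IsExtension D W E → φ ∈ E

/-! Literals -/

/-- A literal: a letter together with a sign (`pos = true` means a positive literal). -/
structure Lit (V : Type) : Type where
  letter : V
  pos : Bool

/-- The formula corresponding to a literal. -/
def Lit.toForm {V : Type} (l : Lit V) : Form V :=
  if l.pos then Form.atom l.letter else Form.neg (Form.atom l.letter)

/-- Negation of a literal (so that `¬¬a = a`). -/
def Lit.negate {V : Type} (l : Lit V) : Lit V := ⟨l.letter, !l.pos⟩

/-- A set of literals is consistent if it contains no complementary pair. -/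
def LitConsistent {V : Type} (S : Set (Lit V)) : Prop := ∀ l ∈ S, l.negate ∉ S

/-! Normal mixed unary (NMU) default theories -/

/-- An NMU default `α : β / β` with `α` empty or a single literal and `β` a single literal. -/
structure NMUDefault (V : Type) : Type where
  pre : Option (Lit V)
  concl : Lit V

/-- The general default rule corresponding to an NMU default. -/
def NMUDefault.toDefault {V : Type} (d : NMUDefault V) : Default V :=
  ⟨d.pre.map Lit.toForm, [d.concl.toForm], d.concl.toForm⟩

/-- `E` is an extension of the NMU theory `(D, W)`. -/
def NMU.IsExtension {V : Type} (D : Set (NMUDefault V)) (W : Set (Lit V))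
    (E : Set (Form V)) : Prop :=
  _root_.IsExtension (NMUDefault.toDefault '' D) (Lit.toForm '' W) E

/-- The NMU theory `(D, W)` entails the literal `l`. -/
def NMU.entails {V : Type} (D : Set (NMUDefault V)) (W : Set (Lit V)) (l : Lit V) : Prop :=
  _root_.entails (NMUDefault.toDefault '' D) (Lit.toForm '' W) l.toForm

/-- An NMU theory is normal unary (NU) if every nonempty prerequisite is positive. -/
def IsNU {V : Type} (D : Set (NMUDefault V)) : Prop :=
  ∀ d ∈ D, ∀ p ∈ d.pre, p.pos = true

/-! Atomic dependency graph -/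

/-- Edge `(x, y)` of the atomic dependency graph: `x` occurs in the prerequisite and `y`
in the consequent of some default of `D`. -/
def depEdge {V : Type} (D : Set (NMUDefault V)) (x y : V) : Prop :=
  ∃ d ∈ D, (∃ p ∈ d.pre, p.letter = x) ∧ d.concl.letter = y

/-- There is a path from `x` to `y` in the atomic dependency graph. -/
def depReach {V : Type} (D : Set (NMUDefault V)) : V → V → Prop :=
  Relation.ReflTransGen (depEdge D)

/-- A set of literals `S` influences a literal `l`. -/
def influences {V : Type} (D : Set (NMUDefault V)) (S : Set (Lit V)) (l : Lit V) : Prop :=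
  ∃ t ∈ S, depReach D t.letter l.letter

/-- `S` is an outlier witness set for `L` in the NMU theory `(D, W)`. -/
def NMUWitness {V : Type} (D : Set (NMUDefault V)) (W L S : Set (Lit V)) : Prop :=
  S.Nonempty ∧ S ⊆ W \ L ∧
  (∀ l ∈ S, NMU.entails D (W \ S) l.negate) ∧
  ¬ (∀ l ∈ S, NMU.entails D (W \ (S ∪ L)) l.negate)

/-- `S` is a strong outlier witness set for `L` in the NMU theory `(D, W)`. -/
def NMUStrongWitness {V : Type} (D : Set (NMUDefault V)) (W L S : Set (Lit V)) : Prop :=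
  S.Nonempty ∧ S ⊆ W \ L ∧
  (∀ l ∈ S, NMU.entails D (W \ S) l.negate) ∧
  (∀ l ∈ S, ¬ NMU.entails D (W \ (S ∪ L)) l.negate)

/-- The letter `a` occurs in the NMU theory `(D, W)`. -/
def occursIn {V : Type} (D : Set (NMUDefault V)) (W : Set (Lit V)) (a : V) : Prop :=
  (∃ l ∈ W, l.letter = a) ∨ ∃ d ∈ D, d.concl.letter = a ∨ ∃ p ∈ d.pre, p.letter = a

/-!
Whether a literal `t` is entailed depends only on the part of the theory lying above the letter
of `t` in the atomic dependency graph. Indeed, entailment is decided by the literal fixpoints of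
Reiter's construction, these restrict to fixpoints of the defaults concluding letters in any
backward-closed set `R` of letters, and every fixpoint of the restricted theory extends (greedily,
since the defaults are normal) to one of the whole theory; normal fixpoints form an antichain,
so the extension restricts back to the fixpoint we started from.

Consequently, for a strong witness set `S` and `l ∈ S`, the members of `S` whose letter reaches
the letter of `l` already form a strong witness set. By minimality this is all of `S`, so the
letters of `S` lie in one strongly connected component; they are pairwise distinct because `W`
is consistent, hence there are at most `c` of them.
-/

namespace Lit

variable {V : Type}

@[simp] lemma negate_negate (l : Lit V) : l.negate.negate = l := by
  cases l; simp [negate]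

lemma negate_ne_self (l : Lit V) : l.negate ≠ l := by
  cases l; simp [negate]

lemma sat_toForm (v : V → Prop) (l : Lit V) : l.toForm.sat v ↔ (v l.letter ↔ l.pos = true) := by
  rcases l with ⟨a, _ | _⟩ <;> simp [toForm, Form.sat]

lemma sat_neg_toForm (v : V → Prop) (l : Lit V) :
    (Form.neg l.toForm).sat v ↔ l.negate.toForm.sat v := by
  rcases l with ⟨a, _ | _⟩ <;> simp [Form.sat, sat_toForm, negate]

end Lit

namespace LitConsistent

variable {V : Type} {S T : Set (Lit V)}

lemma mono (hT : LitConsistent T) (h : S ⊆ T) : LitConsistent S :=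
  fun l hl hnl => hT l (h hl) (h hnl)

lemma injOn_letter (hS : LitConsistent S) : Set.InjOn Lit.letter S := by
  rintro ⟨a, b⟩ hl ⟨a', b'⟩ hl' (rfl : a = a')
  by_contra hne
  obtain rfl : b' = !b := by cases b <;> cases b' <;> simp_all
  exact hS _ hl hl'

end LitConsistent

section logClosure

variable {V : Type} {T U : Set (Form V)}

lemma subset_logClosure : T ⊆ logClosure T :=
  fun _ hφ _ hv => hv _ hφ

lemma logClosure_mono (h : T ⊆ U) : logClosure T ⊆ logClosure U :=
  fun _ hφ v hv => hφ v fun ψ hψ => hv ψ (h hψ)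

lemma logClosure_logClosure : logClosure (logClosure T) = logClosure T :=
  subset_logClosure.antisymm' fun _ hφ v hv => hφ v fun _ hψ => hψ v hv

lemma neg_toForm_mem_logClosure_iff (l : Lit V) :
    Form.neg l.toForm ∈ logClosure T ↔ l.negate.toForm ∈ logClosure T := by
  simp only [logClosure, Set.mem_ofPred_eq, Lit.sat_neg_toForm]

lemma LitConsistent.toForm_mem_logClosure_iff {M : Set (Lit V)} (hM : LitConsistent M)
    (l : Lit V) : l.toForm ∈ logClosure (Lit.toForm '' M) ↔ l ∈ M := by
  classical
  refine ⟨fun h => ?_, fun h => subset_logClosure ⟨l, h, rfl⟩⟩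
  by_contra hl
  -- `v` makes the literals of `M` true except at the letter of `l`, where it makes `l` false.
  let v : V → Prop := fun x => if x = l.letter then l.pos = false else ⟨x, true⟩ ∈ M
  have hvM : ∀ m ∈ M, m.toForm.sat v := by
    rintro ⟨x, b⟩ hm
    by_cases hx : x = l.letter
    · subst hx
      have hml : (⟨l.letter, b⟩ : Lit V) ≠ l := fun h => hl (h ▸ hm)
      cases l
      cases b <;> simp_all [Lit.sat_toForm, v]
    · have hneg : (⟨x, !b⟩ : Lit V) ∉ M := hM _ hm
      cases b <;> simp_all [Lit.sat_toForm, v]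
  have hvl := h v (by rintro _ ⟨m, hm, rfl⟩; exact hvM m hm)
  cases l with
  | mk a b => cases b <;> simp [Lit.sat_toForm, v] at hvl

end logClosure

section Extension

variable {V : Type} {D : Set (Default V)} {W E : Set (Form V)}

lemma IsExtension.mem_iff (hE : IsExtension D W E) {φ : Form V} :
    φ ∈ E ↔ ∃ i, φ ∈ extStage D W E i :=
  (Set.ext_iff.1 hE φ).trans Set.mem_iUnion

lemma extStage_succ_subset (i : ℕ) : extStage D W E i ⊆ extStage D W E (i + 1) :=
  fun _ hφ => Or.inl (subset_logClosure hφ)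

lemma IsExtension.mem_of_imp (hE : IsExtension D W E) {φ ψ : Form V} (hφ : φ ∈ E)
    (h : ∀ v, φ.sat v → ψ.sat v) : ψ ∈ E := by
  obtain ⟨i, hi⟩ := hE.mem_iff.1 hφ
  exact hE.mem_iff.2 ⟨i + 1, Or.inl fun v hv => h v (hv φ hi)⟩

end Extension

namespace NMU

variable {V : Type}

/-- The stages of Reiter's construction on literals, with justifications tested against `M`. -/
def stage (D : Set (NMUDefault V)) (W M : Set (Lit V)) : ℕ → Set (Lit V)
  | 0 => W
  | i + 1 => stage D W M i ∪
      {l | ∃ d ∈ D, d.concl = l ∧ (∀ p ∈ d.pre, p ∈ stage D W M i) ∧ l.negate ∉ M}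

def IsFixpoint (D : Set (NMUDefault V)) (W M : Set (Lit V)) : Prop :=
  M = ⋃ i, stage D W M i

def Coherent (W M : Set (Lit V)) : Prop :=
  ∀ l ∈ M, l ∈ W ∨ l.negate ∉ M

def Grounded (D : Set (NMUDefault V)) (W M : Set (Lit V)) : Prop :=
  ∀ M', M ⊆ M' → Coherent W M' → M ⊆ ⋃ i, stage D W M' i

variable {D : Set (NMUDefault V)} {W M N : Set (Lit V)}

lemma stage_mono : Monotone (stage D W M) :=
  monotone_nat_of_le_succ fun _ => Set.subset_union_left

lemma concl_mem_iUnion_stage {d : NMUDefault V} (hd : d ∈ D)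
    (hpre : ∀ p ∈ d.pre, p ∈ ⋃ i, stage D W M i) (hneg : d.concl.negate ∉ M) :
    d.concl ∈ ⋃ i, stage D W M i := by
  obtain ⟨i, hi⟩ : ∃ i, ∀ p ∈ d.pre, p ∈ stage D W M i := by
    cases hp : d.pre with
    | none => exact ⟨0, by simp⟩
    | some p =>
      obtain ⟨i, hi⟩ := Set.mem_iUnion.1 (hpre p hp)
      exact ⟨i, by simpa using hi⟩
  exact Set.mem_iUnion.2 ⟨i + 1, Or.inr ⟨d, hd, rfl, hi, hneg⟩⟩

lemma iUnion_stage_subset (hW : W ⊆ N)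
    (hcl : ∀ d ∈ D, (∀ p ∈ d.pre, p ∈ N) → d.concl.negate ∉ M → d.concl ∈ N) :
    ⋃ i, stage D W M i ⊆ N := by
  refine Set.iUnion_subset fun i => ?_
  induction i with
  | zero => exact hW
  | succ i ih =>
    rintro l (hl | ⟨d, hd, rfl, hpre, hneg⟩)
    · exact ih hl
    · exact hcl d hd (fun p hp => ih (hpre p hp)) hneg

lemma stage_subset (i : ℕ) : stage D W M i ⊆ W ∪ NMUDefault.concl '' D := by
  induction i with
  | zero => exact Set.subset_union_left
  | succ i ih =>
    rintro l (hl | ⟨d, hd, rfl, -⟩)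
    · exact ih hl
    · exact Or.inr ⟨d, hd, rfl⟩

lemma mem_or_negate_notMem_of_mem_stage {i : ℕ} {l : Lit V} (hl : l ∈ stage D W M i) :
    l ∈ W ∨ l.negate ∉ M := by
  induction i with
  | zero => exact Or.inl hl
  | succ i ih =>
    rcases hl with hl | ⟨d, -, rfl, -, hneg⟩
    · exact ih hl
    · exact Or.inr hneg

lemma coherent_iUnion_stage (h : ⋃ i, stage D W M i ⊆ M) :
    Coherent W (⋃ i, stage D W M i) := by
  intro l hl
  obtain ⟨i, hi⟩ := Set.mem_iUnion.1 hl
  exact (mem_or_negate_notMem_of_mem_stage hi).imp_right fun hneg hneg' => hneg (h hneg')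

lemma Coherent.litConsistent (hM : Coherent W M) (hW : LitConsistent W) : LitConsistent M := by
  intro l hl hnl
  rcases hM l hl with hlW | hneg
  · rcases hM _ hnl with hnlW | hnn
    · exact hW l hlW hnlW
    · exact hnn (by simpa using hl)
  · exact hneg hnl

lemma Coherent.insert (hM : Coherent W M) {c : Lit V} (hc : c.negate ∉ M) :
    Coherent W (insert c M) := by
  rintro l (rfl | hl)
  · exact Or.inr fun h => h.elim l.negate_ne_self hc
  · refine (hM l hl).imp_right fun hneg h => h.elim (fun hlc => hc ?_) hneg
    rwa [← hlc, Lit.negate_negate]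

lemma Grounded.insert (hM : Grounded D W M) {d : NMUDefault V} (hd : d ∈ D)
    (hpre : ∀ p ∈ d.pre, p ∈ M) : Grounded D W (insert d.concl M) := by
  intro M' hM' hcoh
  have hMM' := hM M' ((Set.subset_insert _ _).trans hM') hcoh
  refine Set.insert_subset ?_ hMM'
  rcases hcoh _ (hM' (Set.mem_insert _ _)) with hW | hneg
  · exact Set.mem_iUnion.2 ⟨0, hW⟩
  · exact concl_mem_iUnion_stage hd (fun p hp => hMM' (hpre p hp)) hneg

namespace IsFixpoint

lemma mem_iff (hM : IsFixpoint D W M) {l : Lit V} : l ∈ M ↔ ∃ i, l ∈ stage D W M i :=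
  (Set.ext_iff.1 hM l).trans Set.mem_iUnion

lemma base_subset (hM : IsFixpoint D W M) : W ⊆ M :=
  fun _ hl => hM.mem_iff.2 ⟨0, hl⟩

lemma stage_subset (hM : IsFixpoint D W M) (i : ℕ) : stage D W M i ⊆ M :=
  fun _ hl => hM.mem_iff.2 ⟨i, hl⟩

lemma closed (hM : IsFixpoint D W M) {d : NMUDefault V} (hd : d ∈ D)
    (hpre : ∀ p ∈ d.pre, p ∈ M) (hneg : d.concl.negate ∉ M) : d.concl ∈ M := by
  rw [hM] at hpre ⊢
  exact concl_mem_iUnion_stage hd hpre (hM ▸ hneg)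

lemma coherent (hM : IsFixpoint D W M) : Coherent W M := by
  rw [hM]
  exact coherent_iUnion_stage hM.symm.subset

lemma litConsistent (hM : IsFixpoint D W M) (hW : LitConsistent W) : LitConsistent M :=
  hM.coherent.litConsistent hW

lemma subset_union (hM : IsFixpoint D W M) : M ⊆ W ∪ NMUDefault.concl '' D :=
  hM.subset.trans <| Set.iUnion_subset NMU.stage_subset

lemma finite (hM : IsFixpoint D W M) (hW : W.Finite) (hD : D.Finite) : M.Finite :=
  (hW.union (hD.image _)).subset hM.subset_union

lemma eq_of_subset (hN : IsFixpoint D W N) (hM : IsFixpoint D W M) (h : N ⊆ M) : N = M := by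
  refine h.antisymm ?_
  rw [hM]
  exact iUnion_stage_subset hN.base_subset fun d hd hpre hneg =>
    hN.closed hd hpre fun hn => hneg (h hn)

end IsFixpoint

/-- A maximal coherent grounded set between `M₀` and `M₀ ∪ NMUDefault.concl '' D` is closed
under the applicable defaults. -/
theorem exists_isFixpoint_superset {M₀ : Set (Lit V)} (hD : D.Finite) (hM₀ : M₀.Finite)
    (hW : W ⊆ M₀) (hcoh : Coherent W M₀) (hgr : Grounded D W M₀) :
    ∃ M, IsFixpoint D W M ∧ M₀ ⊆ M := by
  set 𝒮 := {M | M₀ ⊆ M ∧ M ⊆ M₀ ∪ NMUDefault.concl '' D ∧ Coherent W M ∧ Grounded D W M}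
  have h𝒮 : 𝒮.Finite := (hM₀.union (hD.image _)).finite_subsets.subset fun M hM => hM.2.1
  obtain ⟨M, hM⟩ := h𝒮.exists_maximal ⟨M₀, subset_rfl, Set.subset_union_left, hcoh, hgr⟩
  obtain ⟨hM₀M, hbound, hcohM, hgrM⟩ := hM.prop
  have hclosed : ∀ d ∈ D, (∀ p ∈ d.pre, p ∈ M) → d.concl.negate ∉ M → d.concl ∈ M := by
    intro d hd hpre hneg
    have hins : insert d.concl M ∈ 𝒮 :=
      ⟨hM₀M.trans (Set.subset_insert _ _), Set.insert_subset (Or.inr ⟨d, hd, rfl⟩) hbound,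
        hcohM.insert hneg, hgrM.insert hd hpre⟩
    exact hM.2 hins (Set.subset_insert _ _) (Set.mem_insert _ _)
  exact ⟨M, (hgrM M subset_rfl hcohM).antisymm (iUnion_stage_subset (hW.trans hM₀M) hclosed),
    hM₀M⟩

variable {E : Set (Form V)}

lemma image_stage_subset_extStage (hjust : ∀ l : Lit V, l.negate ∉ M → Form.neg l.toForm ∉ E)
    (i : ℕ) :
    Lit.toForm '' stage D W M i ⊆ extStage (NMUDefault.toDefault '' D) (Lit.toForm '' W) E i := by
  induction i with
  | zero => exact subset_rfl
  | succ i ih =>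
    rintro _ ⟨l, hl | ⟨d, hd, rfl, hpre, hneg⟩, rfl⟩
    · exact extStage_succ_subset i (ih ⟨l, hl, rfl⟩)
    · refine Or.inr ⟨d.toDefault, ⟨d, hd, rfl⟩, rfl, ?_, ?_⟩
      · simp only [NMUDefault.toDefault, Option.mem_map]
        rintro _ ⟨p, hp, rfl⟩
        exact ih ⟨p, hpre p hp, rfl⟩
      · simpa [NMUDefault.toDefault] using hjust _ hneg

lemma extStage_subset_logClosure {G : Set (Lit V)} (hG : LitConsistent G) (hW : W ⊆ G)
    (hcl : ∀ d ∈ D, (∀ p ∈ d.pre, p ∈ G) → Form.neg d.concl.toForm ∉ E → d.concl ∈ G) (i : ℕ) :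
    extStage (NMUDefault.toDefault '' D) (Lit.toForm '' W) E i ⊆ logClosure (Lit.toForm '' G) := by
  induction i with
  | zero => exact (Set.image_mono hW).trans subset_logClosure
  | succ i ih =>
    rintro _ (hφ | ⟨_, ⟨d, hd, rfl⟩, rfl, hpre, hjust⟩)
    · exact logClosure_logClosure.subset (logClosure_mono ih hφ)
    · refine subset_logClosure ⟨d.concl, hcl d hd (fun p hp => ?_) ?_, rfl⟩
      · exact (hG.toForm_mem_logClosure_iff p).1 (ih (hpre _ (Option.mem_map_of_mem _ hp)))
      · exact hjust _ (by simp [NMUDefault.toDefault])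

theorem IsExtension.isFixpoint (hW : LitConsistent W) (hE : NMU.IsExtension D W E) :
    IsFixpoint D W {l | l.toForm ∈ E} := by
  set M := {l : Lit V | l.toForm ∈ E}
  have hneg (l : Lit V) : Form.neg l.toForm ∈ E ↔ l.negate ∈ M :=
    ⟨fun h => hE.mem_of_imp h fun v => (Lit.sat_neg_toForm v l).1,
      fun h => hE.mem_of_imp h fun v => (Lit.sat_neg_toForm v l).2⟩
  have hGM : ⋃ i, stage D W M i ⊆ M := Set.iUnion_subset fun i l hl =>
    hE.mem_iff.2 ⟨i, image_stage_subset_extStage (fun l => mt (hneg l).1) i ⟨l, hl, rfl⟩⟩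
  have hG := (coherent_iUnion_stage hGM).litConsistent hW
  refine Set.Subset.antisymm (fun l hl => ?_) hGM
  obtain ⟨i, hi⟩ := hE.mem_iff.1 hl
  refine (hG.toForm_mem_logClosure_iff l).1 (extStage_subset_logClosure hG ?_ ?_ i hi)
  · exact Set.subset_iUnion_of_subset 0 subset_rfl
  · exact fun d hd hpre hjust => concl_mem_iUnion_stage hd hpre (mt (hneg _).2 hjust)

theorem IsFixpoint.isExtension (hW : LitConsistent W) (hWf : W.Finite) (hD : D.Finite)
    (hM : IsFixpoint D W M) : NMU.IsExtension D W (logClosure (Lit.toForm '' M)) := by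
  have hMc := hM.litConsistent hW
  have hneg (l : Lit V) :
      Form.neg l.toForm ∈ logClosure (Lit.toForm '' M) ↔ l.negate ∈ M :=
    (neg_toForm_mem_logClosure_iff l).trans (hMc.toForm_mem_logClosure_iff _)
  obtain ⟨n, hn⟩ : ∃ n, M ⊆ stage D W M n := by
    have hMf := hM.finite hWf hD
    simpa using stage_mono.directed_le.exists_mem_subset_of_finset_subset_biUnion
      (s := hMf.toFinset) (by simpa using hM.subset)
  refine Set.Subset.antisymm (fun φ hφ => Set.mem_iUnion.2 ⟨n + 1, Or.inl ?_⟩) ?_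
  · refine logClosure_mono ?_ hφ
    exact (Set.image_mono hn).trans (image_stage_subset_extStage (fun l => mt (hneg l).1) n)
  · exact Set.iUnion_subset <| extStage_subset_logClosure hMc hM.base_subset
      fun d hd hpre hjust => hM.closed hd hpre (mt (hneg _).2 hjust)

theorem entails_iff_forall_isFixpoint (hW : LitConsistent W) (hWf : W.Finite) (hD : D.Finite)
    (t : Lit V) : NMU.entails D W t ↔ ∀ M, IsFixpoint D W M → t ∈ M :=
  ⟨fun h _ hM => ((hM.litConsistent hW).toForm_mem_logClosure_iff t).1
      (h _ (hM.isExtension hW hWf hD)),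
    fun h _ hE => h _ (IsExtension.isFixpoint hW hE)⟩

variable {R : Set V}

lemma stage_restrict (hR : ∀ x y, depEdge D x y → y ∈ R → x ∈ R) (i : ℕ) :
    stage {d ∈ D | d.concl.letter ∈ R} {l ∈ W | l.letter ∈ R} {l ∈ M | l.letter ∈ R} i =
      {l ∈ stage D W M i | l.letter ∈ R} := by
  induction i with
  | zero => rfl
  | succ i ih =>
    ext l
    simp only [stage, ih, Set.mem_union, Set.mem_ofPred_eq]
    constructor
    · rintro (hl | ⟨d, ⟨hd, hdR⟩, rfl, hpre, hneg⟩)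
      · exact ⟨Or.inl hl.1, hl.2⟩
      · exact ⟨Or.inr ⟨d, hd, rfl, fun p hp => (hpre p hp).1, fun h => hneg ⟨h, hdR⟩⟩, hdR⟩
    · rintro ⟨hl | ⟨d, hd, rfl, hpre, hneg⟩, hlR⟩
      · exact Or.inl ⟨hl, hlR⟩
      · refine Or.inr ⟨d, ⟨hd, hlR⟩, rfl, fun p hp => ⟨hpre p hp, ?_⟩, fun h => hneg h.1⟩
        exact hR _ _ ⟨d, hd, ⟨p, hp, rfl⟩, rfl⟩ hlR

lemma IsFixpoint.restrict (hR : ∀ x y, depEdge D x y → y ∈ R → x ∈ R) (hM : IsFixpoint D W M) :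
    IsFixpoint {d ∈ D | d.concl.letter ∈ R} {l ∈ W | l.letter ∈ R} {l ∈ M | l.letter ∈ R} := by
  unfold IsFixpoint
  simp_rw [stage_restrict hR]
  ext l
  simp only [Set.mem_iUnion, Set.mem_ofPred_eq, hM.mem_iff, exists_and_right]

lemma IsFixpoint.grounded_union {D' : Set (NMUDefault V)} {W' : Set (Lit V)} (hD : D' ⊆ D)
    (hW : W' ⊆ W) (hN : IsFixpoint D' W' N) : Grounded D W (N ∪ W) := by
  intro M' hM' hcoh
  refine Set.union_subset ?_ (Set.subset_iUnion_of_subset 0 subset_rfl)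
  rw [hN]
  refine Set.iUnion_subset fun i => ?_
  induction i with
  | zero => exact fun l hl => Set.mem_iUnion.2 ⟨0, hW hl⟩
  | succ i ih =>
    rintro l (hl | ⟨d, hd, rfl, hpre, hneg⟩)
    · exact ih hl
    rcases hcoh _ (hM' (Or.inl (hN.stage_subset (i + 1) (Or.inr ⟨d, hd, rfl, hpre, hneg⟩))))
      with h | h
    · exact Set.mem_iUnion.2 ⟨0, h⟩
    · exact concl_mem_iUnion_stage (hD hd) (fun p hp => ih (hpre p hp)) h

lemma IsFixpoint.exists_restrict_eq (hD : D.Finite) (hW : W.Finite)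
    (hR : ∀ x y, depEdge D x y → y ∈ R → x ∈ R)
    (hN : IsFixpoint {d ∈ D | d.concl.letter ∈ R} {l ∈ W | l.letter ∈ R} N) :
    ∃ M, IsFixpoint D W M ∧ {l ∈ M | l.letter ∈ R} = N := by
  have hNR : ∀ l ∈ N, l.letter ∈ R := by
    intro l hl
    rcases hN.subset_union hl with ⟨-, h⟩ | ⟨d, ⟨-, h⟩, rfl⟩ <;> exact h
  have hcoh : Coherent W (N ∪ W) := by
    rintro l (hl | hl)
    · refine (hN.coherent l hl).imp (fun h => h.1) fun hneg h => hneg ?_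
      exact h.elim id fun hW => hN.base_subset ⟨hW, hNR l hl⟩
    · exact Or.inl hl
  obtain ⟨M, hM, hNM⟩ := exists_isFixpoint_superset hD ((hN.finite (hW.sep _) (hD.sep _)).union hW)
    Set.subset_union_right hcoh (hN.grounded_union (Set.sep_subset _ _) (Set.sep_subset _ _))
  exact ⟨M, hM, (hN.eq_of_subset (hM.restrict hR) fun l hl => ⟨hNM (Or.inl hl), hNR l hl⟩).symm⟩

theorem entails_iff_restrict (hD : D.Finite) (hWf : W.Finite) (hW : LitConsistent W)
    (hR : ∀ x y, depEdge D x y → y ∈ R → x ∈ R) {t : Lit V} (ht : t.letter ∈ R) :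
    NMU.entails D W t ↔ NMU.entails {d ∈ D | d.concl.letter ∈ R} {l ∈ W | l.letter ∈ R} t := by
  rw [entails_iff_forall_isFixpoint hW hWf hD, entails_iff_forall_isFixpoint
    (hW.mono (Set.sep_subset _ _)) (hWf.sep _) (hD.sep _)]
  refine ⟨fun h N hN => ?_, fun h M hM => (h _ (hM.restrict hR)).1⟩
  obtain ⟨M, hM, rfl⟩ := hN.exists_restrict_eq hD hWf hR
  exact ⟨h M hM, ht⟩

theorem entails_congr (hD : D.Finite) {W' : Set (Lit V)} (hWf : W.Finite) (hW'f : W'.Finite)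
    (hW : LitConsistent W) (hW' : LitConsistent W') {t : Lit V}
    (h : ∀ l, depReach D l.letter t.letter → (l ∈ W ↔ l ∈ W')) :
    NMU.entails D W t ↔ NMU.entails D W' t := by
  have hR (x y : V) (hxy : depEdge D x y) (hy : y ∈ {x | depReach D x t.letter}) :
      x ∈ {x | depReach D x t.letter} :=
    Relation.ReflTransGen.head hxy hy
  rw [entails_iff_restrict hD hWf hW hR .refl, entails_iff_restrict hD hW'f hW' hR .refl]
  congr! 2
  exact Set.ext fun l => and_congr_left (h l)

end NMU

lemma NMUStrongWitness.sep_reach {V : Type} {D : Set (NMUDefault V)} {W L S : Set (Lit V)}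
    (hD : D.Finite) (hW : W.Finite) (hcons : LitConsistent W) (hS : NMUStrongWitness D W L S)
    {l : Lit V} (hl : l ∈ S) : NMUStrongWitness D W L {s ∈ S | depReach D s.letter l.letter} := by
  obtain ⟨-, hSsub, hent, hnent⟩ := hS
  set S' := {s ∈ S | depReach D s.letter l.letter}
  have hcongr (s : Lit V) (hs : s ∈ S') (U : Set (Lit V)) :
      NMU.entails D (W \ (S ∪ U)) s.negate ↔ NMU.entails D (W \ (S' ∪ U)) s.negate := by
    refine NMU.entails_congr hD hW.sdiff hW.sdiff (hcons.mono Set.sdiff_subset)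
      (hcons.mono Set.sdiff_subset) fun x hx => ?_
    have : x ∈ S ↔ x ∈ S' := ⟨fun h => ⟨h, hx.trans hs.2⟩, fun h => h.1⟩
    simp [this]
  refine ⟨⟨l, hl, .refl⟩, fun s hs => hSsub hs.1, fun s hs => ?_, fun s hs => ?_⟩
  · simpa using (hcongr s hs ∅).1 (by simpa using hent s hs.1)
  · exact mt (hcongr s hs L).2 (hnent s hs.1)

theorem minimal_strong_witness_card_le_general {V : Type} (D : Set (NMUDefault V)) (W : Set (Lit V))
    (L S : Set (Lit V)) (c : ℕ) (hD : D.Finite) (hW : W.Finite)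
    (hcons : LitConsistent W)
    (htight : ∀ A : Finset V, (∀ a ∈ A, occursIn D W a) →
      (∀ a ∈ A, ∀ b ∈ A, depReach D a b) → A.card ≤ c)
    (hwit : NMUStrongWitness D W L S)
    (hmin : ∀ S' ⊆ S, S' ≠ S → ¬ NMUStrongWitness D W L S') :
    S.ncard ≤ c := by
  have hSW : S ⊆ W := fun s hs => (hwit.2.1 hs).1
  have hreach : ∀ s ∈ S, ∀ l ∈ S, depReach D s.letter l.letter := by
    intro s hs l hl
    have hsep : {s ∈ S | depReach D s.letter l.letter} = S := by_contra fun hne =>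
      hmin _ (Set.sep_subset _ _) hne (hwit.sep_reach hD hW hcons hl)
    exact (hsep.symm.subset hs).2
  have hfin : (Lit.letter '' S).Finite := (hW.subset hSW).image _
  calc S.ncard = (Lit.letter '' S).ncard :=
        (hcons.mono hSW).injOn_letter.ncard_image.symm
    _ = hfin.toFinset.card := Set.ncard_eq_toFinset_card _ hfin
    _ ≤ c := by
      refine htight _ ?_ ?_ <;> simp only [Set.Finite.mem_toFinset, Set.forall_mem_image]
      · exact fun s hs => Or.inl ⟨s, hSW hs, rfl⟩
      · exact fun s hs l hl => hreach s hs l hl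

/-- If the consistent NMU theory `(D, W)` has tightness `c` (every set of letters occurring in
the theory and lying in a single SCC of the atomic dependency graph has at most `c` elements),
then every minimal strong outlier witness set `S` for `L` in `(D, W)` has size at most `c`. -/
theorem minimal_strong_witness_card_le {V : Type} (D : Set (NMUDefault V)) (W : Set (Lit V))
    (L S : Set (Lit V)) (c : ℕ) (hD : D.Finite) (hW : W.Finite)
    (hcons : LitConsistent W) (hL : L ⊆ W)
    (htight : ∀ A : Finset V, (∀ a ∈ A, occursIn D W a) →
      (∀ a ∈ A, ∀ b ∈ A, depReach D a b) → A.card ≤ c)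
    (hwit : NMUStrongWitness D W L S)
    (hmin : ∀ S' ⊆ S, S' ≠ S → ¬ NMUStrongWitness D W L S') :
    S.ncard ≤ c :=
  minimal_strong_witness_card_le_general D W L S c hD hW hcons htight hwit hmin
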